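/- arXiv:2311.01002 — 2 statements merged into one kernel-verified Lean document; each statement's English description precedes it below -/
import Mathlib

section
/- Let f : Finset V → ℝ be a monotone, submodular set function with f(∅) = 0 on a finite ground set V, and let s be a positive integer. Let S_g be the set obtained by the greedy algorithm that, starting from ∅, iteratively adds for s steps an element x maximizing the marginal gain f(S ∪ {x}) − f(S). Then f(S_g) ≥ (1 − 1/e) · max{f(S) : S ⊆ V, |S| ≤ s}. -/
theorem stmt_4 {V : Type*} [Fintype V] [DecidableEq V]
    (f : Finset V → ℝ)
    (hmono : ∀ S T : Finset V, S ⊆ T → f S ≤ f T)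
    (hsub : ∀ S T : Finset V, S ⊆ T → ∀ x : V, x ∉ T →
      f (insert x S) - f S ≥ f (insert x T) - f T)
    (hf0 : f ∅ = 0)
    (s : ℕ) (hs : 0 < s)
    (G : ℕ → Finset V) (hG0 : G 0 = ∅)
    (hGreedy : ∀ t < s, ∃ x : V, x ∉ G t ∧ G (t + 1) = insert x (G t) ∧
      ∀ y : V, f (insert x (G t)) - f (G t) ≥ f (insert y (G t)) - f (G t)) :
    ∀ T : Finset V, T.card ≤ s →
      f (G s) ≥ (1 - 1 / Real.exp 1) * f T := by
  intro T hT
  have hT0 : 0 ≤ f T := by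
    have := hmono ∅ T (Finset.empty_subset T); linarith [hf0 ▸ this]
  have hs' : (0:ℝ) < (s:ℝ) := by exact_mod_cast hs
  have h1s : (0:ℝ) ≤ 1 - 1/(s:ℝ) := by
    have : (1:ℝ) ≤ (s:ℝ) := by exact_mod_cast hs
    have h := div_le_one_of_le₀ this (by linarith)
    linarith
  -- submodular telescoping
  have tel : ∀ (B A : Finset V),
      f (A ∪ B) - f A ≤ ∑ y ∈ B, (f (insert y A) - f A) := by
    intro B
    induction B using Finset.induction_on with
    | empty => intro A; simp
    | @insert a B' ha ih =>
      intro A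
      rw [Finset.sum_insert ha, Finset.union_insert]
      by_cases hA : a ∈ A ∪ B'
      · rw [Finset.insert_eq_self.mpr hA]
        have h1 := hmono A (insert a A) (Finset.subset_insert a A)
        have := ih A
        linarith
      · have h2 := hsub A (A ∪ B') Finset.subset_union_left a hA
        have := ih A
        linarith
  -- main induction
  have key : ∀ t, t ≤ s → f T - f (G t) ≤ (1 - 1/(s:ℝ))^t * f T := by
    intro t
    induction t with
    | zero => intro _; rw [hG0, hf0]; simp
    | succ t ih =>
      intro ht
      have ht' : t < s := Nat.lt_of_succ_le ht
      have ihh := ih (le_of_lt ht')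
      obtain ⟨x, hx1, hx2, hx3⟩ := hGreedy t ht'
      set d := f (G (t+1)) - f (G t) with hd
      have hd0 : 0 ≤ d := by
        rw [hd, hx2]
        have := hmono (G t) (insert x (G t)) (Finset.subset_insert x (G t))
        linarith
      -- f T ≤ f (G t) + s * d
      have hstep : f T - f (G t) ≤ (s:ℝ) * d := by
        have h1 := hmono T (G t ∪ T) Finset.subset_union_right
        have h2 := tel T (G t)
        have h3 : ∑ y ∈ T, (f (insert y (G t)) - f (G t)) ≤ T.card • d := by
          apply Finset.sum_le_card_nsmul
          intro y _
          rw [hd, hx2]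
          exact hx3 y
        rw [nsmul_eq_mul] at h3
        have h4 : (T.card : ℝ) * d ≤ (s:ℝ) * d := by
          apply mul_le_mul_of_nonneg_right _ hd0
          exact_mod_cast hT
        linarith
      have hdge : (f T - f (G t)) / (s:ℝ) ≤ d := by
        rw [div_le_iff₀ hs']; linarith
      have heq : (1 - 1/(s:ℝ)) * (f T - f (G t))
          = (f T - f (G t)) - (f T - f (G t)) / (s:ℝ) := by
        field_simp
      have hmul : (1 - 1/(s:ℝ)) * (f T - f (G t))
          ≤ (1 - 1/(s:ℝ)) * ((1 - 1/(s:ℝ))^t * f T) :=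
        mul_le_mul_of_nonneg_left ihh h1s
      calc f T - f (G (t+1)) = (f T - f (G t)) - d := by ring
        _ ≤ (f T - f (G t)) - (f T - f (G t)) / (s:ℝ) := by linarith
        _ = (1 - 1/(s:ℝ)) * (f T - f (G t)) := heq.symm
        _ ≤ (1 - 1/(s:ℝ)) * ((1 - 1/(s:ℝ))^t * f T) := hmul
        _ = (1 - 1/(s:ℝ))^(t+1) * f T := by ring
  have hfin := key s le_rfl
  -- (1 - 1/s)^s ≤ 1/e
  have hexp : (1 - 1/(s:ℝ))^s ≤ 1 / Real.exp 1 := by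
    have h1 : (1 - 1/(s:ℝ)) ≤ Real.exp (-(1/(s:ℝ))) := by
      have := Real.add_one_le_exp (-(1/(s:ℝ)))
      linarith
    have h2 : (1 - 1/(s:ℝ))^s ≤ (Real.exp (-(1/(s:ℝ))))^s :=
      pow_le_pow_left₀ h1s h1 s
    have h3 : (Real.exp (-(1/(s:ℝ))))^s = Real.exp (-1) := by
      rw [← Real.exp_nat_mul]
      congr 1
      field_simp
    rw [h3] at h2
    rw [Real.exp_neg] at h2
    simpa [one_div] using h2
  have hmul2 : (1 - 1/(s:ℝ))^s * f T ≤ (1 / Real.exp 1) * f T :=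
    mul_le_mul_of_nonneg_right hexp hT0
  have : f T - f (G s) ≤ (1 / Real.exp 1) * f T := le_trans hfin hmul2
  linarith [this]
end

section
/- Let f : Finset V → ℝ be monotone and submodular with f(∅) = 0, and let S, S* ⊆ V with |S*| ≤ s. Then f(S*) ≤ f(S) + ∑_{x ∈ S* \ S} (f(S ∪ {x}) − f(S)) ≤ f(S) + s · max_{x ∉ S} (f(S ∪ {x}) − f(S)). -/
/-! Adding the elements of `S* \ S` to `S` one at a time, submodularity bounds each increment
by the marginal gain of that element at `S`, and monotonicity gives `f S* ≤ f (S ∪ S*)`.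
Monotonicity also makes every marginal gain nonnegative, so each of the at most `s` terms
may be replaced by the largest one. -/

open Finset

section Submodular

variable {V : Type*} [DecidableEq V]

theorem le_add_sum_marginal_of_disjoint (f : Finset V → ℝ)
    (hsub : ∀ S T : Finset V, S ⊆ T → ∀ x : V, x ∉ T →
      f (insert x S) - f S ≥ f (insert x T) - f T)
    (S T : Finset V) (hST : Disjoint S T) :
    f (S ∪ T) ≤ f S + ∑ x ∈ T, (f (insert x S) - f S) := by
  induction T using Finset.induction with
  | empty => simp
  | insert a T haT ih =>
    obtain ⟨haS, hST⟩ : a ∉ S ∧ Disjoint S T := by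
      simpa [disjoint_insert_right] using hST
    have haU : a ∉ S ∪ T := by simp [haS, haT]
    have hstep := hsub S (S ∪ T) subset_union_left a haU
    rw [union_insert, sum_insert haT]
    linarith [ih hST]

theorem le_add_sum_marginal_sdiff (f : Finset V → ℝ)
    (hmono : ∀ S T : Finset V, S ⊆ T → f S ≤ f T)
    (hsub : ∀ S T : Finset V, S ⊆ T → ∀ x : V, x ∉ T →
      f (insert x S) - f S ≥ f (insert x T) - f T)
    (S T : Finset V) :
    f T ≤ f S + ∑ x ∈ T \ S, (f (insert x S) - f S) :=
  calc f T ≤ f (S ∪ (T \ S)) := hmono _ _ (by simp [subset_union_right])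
    _ ≤ _ := le_add_sum_marginal_of_disjoint f hsub S _ disjoint_sdiff

end Submodular

theorem Finset.sum_le_mul_sup' {ι : Type*} {A B : Finset ι} {g : ι → ℝ} {s : ℕ}
    (hAB : A ⊆ B) (hA : A.card ≤ s) (hB : B.Nonempty) (hsup : 0 ≤ B.sup' hB g) :
    ∑ x ∈ A, g x ≤ s * B.sup' hB g :=
  calc ∑ x ∈ A, g x ≤ A.card • B.sup' hB g :=
        sum_le_card_nsmul _ _ _ fun x hx => le_sup' g (hAB hx)
    _ ≤ s * B.sup' hB g := by
        rw [nsmul_eq_mul]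
        exact mul_le_mul_of_nonneg_right (by exact_mod_cast hA) hsup

theorem stmt_15_general {V : Type*} [Fintype V] [DecidableEq V]
    (f : Finset V → ℝ)
    (hmono : ∀ S T : Finset V, S ⊆ T → f S ≤ f T)
    (hsub : ∀ S T : Finset V, S ⊆ T → ∀ x : V, x ∉ T →
      f (insert x S) - f S ≥ f (insert x T) - f T)
    (s : ℕ) (S Sstar : Finset V) (hcard : Sstar.card ≤ s)
    (hne : Sᶜ.Nonempty) :
    f Sstar ≤ f S + ∑ x ∈ Sstar \ S, (f (insert x S) - f S) ∧
    f S + ∑ x ∈ Sstar \ S, (f (insert x S) - f S) ≤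
      f S + (s : ℝ) * Sᶜ.sup' hne (fun x => f (insert x S) - f S) := by
  refine ⟨le_add_sum_marginal_sdiff f hmono hsub S Sstar, add_le_add_right ?_ _⟩
  have hsup : 0 ≤ Sᶜ.sup' hne (fun x => f (insert x S) - f S) := by
    obtain ⟨y, hy⟩ := hne
    exact (sub_nonneg.mpr (hmono _ _ (subset_insert y S))).trans (le_sup' (fun x => f (insert x S) - f S) hy)
  refine sum_le_mul_sup' (fun x hx => ?_) ((card_le_card sdiff_subset).trans hcard) hne hsup
  simpa using (mem_sdiff.mp hx).2

theorem stmt_15 {V : Type*} [Fintype V] [DecidableEq V]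
    (f : Finset V → ℝ)
    (hmono : ∀ S T : Finset V, S ⊆ T → f S ≤ f T)
    (hsub : ∀ S T : Finset V, S ⊆ T → ∀ x : V, x ∉ T →
      f (insert x S) - f S ≥ f (insert x T) - f T)
    (hf0 : f ∅ = 0)
    (s : ℕ) (S Sstar : Finset V) (hcard : Sstar.card ≤ s)
    (hne : Sᶜ.Nonempty) :
    f Sstar ≤ f S + ∑ x ∈ Sstar \ S, (f (insert x S) - f S) ∧
    f S + ∑ x ∈ Sstar \ S, (f (insert x S) - f S) ≤
      f S + (s : ℝ) * Sᶜ.sup' hne (fun x => f (insert x S) - f S) :=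
  stmt_15_general f hmono hsub s S Sstar hcard hne
end
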